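/- arXiv:1006.0671 — 2 statements merged into one kernel-verified Lean document; each statement's English description precedes it below -/
import Mathlib

section
/- Downward closedness of the SAT region fails in the DC power flow model: in the triangle network with unit reactances x_{01} = x_{02} = x_{12} = 1, line capacities u_{01} = u_{02} = 10 and u_{12} = 1/2, generator capacity P_0 = 20 at node 0, the demand vector (d_1, d_2) = (6, 6) is SAT, while the componentwise smaller demand vector (6, 3) is UNSAT. -/
/-- SAT predicate for the triangle network: generator at node `0` with capacity
`P0`, loads `d1`, `d2` at nodes `1`, `2`, reactances `x01, x02, x12`, line
capacities `u01, u02, u12`. There must exist flows, phases and generation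
satisfying flow conservation, the DC phase conditions and all capacity bounds. -/
def TriSat (x01 x02 x12 u01 u02 u12 P0 d1 d2 : ℝ) : Prop :=
  ∃ f01 f02 f12 θ0 θ1 θ2 p0 : ℝ,
    0 ≤ p0 ∧ p0 ≤ P0 ∧
    f01 + f02 = p0 ∧
    -f01 + f12 = -d1 ∧
    -f02 - f12 = -d2 ∧
    θ0 - θ1 = x01 * f01 ∧
    θ0 - θ2 = x02 * f02 ∧
    θ1 - θ2 = x12 * f12 ∧
    |f01| ≤ u01 ∧ |f02| ≤ u02 ∧ |f12| ≤ u12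

/-! With a single generator the flow is determined by the demands: conservation gives
`f01 = d1 + f12` and `f02 = d2 - f12`, and the phase drops around the cycle `0 → 1 → 2`
and `0 → 2` agree, so `(x01 + x02 + x12) f12 = x02 d2 - x01 d1`. For demands `(6, 3)` this
forces `f12 = -1`, beyond the capacity `1/2` of line `12`, whereas for the symmetric demand
`(6, 6)` line `12` carries no flow at all. -/

namespace TriSat

variable {x01 x02 x12 u01 u02 u12 P0 d1 d2 : ℝ}

theorem exists_cross_flow (h : TriSat x01 x02 x12 u01 u02 u12 P0 d1 d2) :
    ∃ f12, (x01 + x02 + x12) * f12 = x02 * d2 - x01 * d1 ∧ |f12| ≤ u12 := by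
  obtain ⟨f01, f02, f12, θ0, θ1, θ2, p0, -, -, -, hd1, hd2, hθ01, hθ02, hθ12, -, -, hf12⟩ := h
  have hf01 : f01 = d1 + f12 := by linarith
  have hf02 : f02 = d2 - f12 := by linarith
  subst hf01 hf02
  exact ⟨f12, by linear_combination hθ02 - hθ01 - hθ12, hf12⟩

theorem abs_sub_le (h : TriSat x01 x02 x12 u01 u02 u12 P0 d1 d2)
    (hx : 0 ≤ x01 + x02 + x12) :
    |x02 * d2 - x01 * d1| ≤ (x01 + x02 + x12) * u12 := by
  obtain ⟨f12, hf, hf12⟩ := h.exists_cross_flow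
  rw [← hf, abs_mul, abs_of_nonneg hx]
  exact mul_le_mul_of_nonneg_left hf12 hx

theorem of_symmetric {x x12 u u12 P0 d : ℝ} (hd : 0 ≤ d) (hdu : d ≤ u) (hP0 : 2 * d ≤ P0)
    (hu12 : 0 ≤ u12) : TriSat x x x12 u u u12 P0 d d :=
  ⟨d, d, 0, x * d, 0, 0, 2 * d, by linarith, hP0, by ring, by ring, by ring, by ring,
    by ring, by ring, by rwa [abs_of_nonneg hd], by rwa [abs_of_nonneg hd],
    by rwa [abs_zero]⟩

end TriSat

/-- **Failure of downward closedness in the DC model:** in the triangle with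
unit reactances, `u01 = u02 = 10`, `u12 = 1/2`, `P0 = 20`, demand `(6,6)` is
SAT while the componentwise smaller demand `(6,3)` is UNSAT. -/
theorem stmt_9 :
    TriSat 1 1 1 10 10 (1/2) 20 6 6 ∧ ¬ TriSat 1 1 1 10 10 (1/2) 20 6 3 := by
  refine ⟨TriSat.of_symmetric (by norm_num) (by norm_num) (by norm_num) (by norm_num),
    fun h => ?_⟩
  have := h.abs_sub_le (by norm_num)
  norm_num at this
end

section
/- In the triangle network with a single unlimited generator at node 0 and equal generator-to-load reactances x_{01} = x_{02} = x, if |x_{02}·(d/2) − x_{01}·d| > (x_{01}+x_{02}+x_{12}) u_{12}, i.e., x d / 2 > (2x + x_{12}) u_{12}, then the symmetric demand (d, d) is SAT whenever d ≤ min(u_{01}, u_{02}), while the reduced demand (d, d/2) is UNSAT. -/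
/-- SAT predicate for the triangle network with an unlimited generator at node
`0`. -/
def TriSatU (x01 x02 x12 u01 u02 u12 d1 d2 : ℝ) : Prop :=
  ∃ f01 f02 f12 θ0 θ1 θ2 : ℝ,
    f01 + f02 = d1 + d2 ∧
    -f01 + f12 = -d1 ∧
    -f02 - f12 = -d2 ∧
    θ0 - θ1 = x01 * f01 ∧
    θ0 - θ2 = x02 * f02 ∧
    θ1 - θ2 = x12 * f12 ∧
    |f01| ≤ u01 ∧ |f02| ≤ u02 ∧ |f12| ≤ u12

/-- **Decreasing a load can destroy feasibility:** in the symmetric triangle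
(`x01 = x02 = x`) with `x * d > 2 * (2x + x12) * u12`, the symmetric demand
`(d, d)` is SAT whenever `d ≤ min u01 u02`, while the reduced demand
`(d, d/2)` is UNSAT. -/
theorem stmt_15 (x x12 u01 u02 u12 d : ℝ)
    (hx : 0 < x) (hx12 : 0 < x12)
    (hu01 : 0 < u01) (hu02 : 0 < u02) (hu12 : 0 < u12) (hd : 0 ≤ d)
    (hcrit : x * d > 2 * (2 * x + x12) * u12) :
    (d ≤ min u01 u02 → TriSatU x x x12 u01 u02 u12 d d) ∧
    ¬ TriSatU x x x12 u01 u02 u12 d (d / 2) := by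
  constructor
  · intro hle
    refine ⟨d, d, 0, 0, -(x*d), -(x*d), by ring, by ring, by ring, by ring, by ring, by ring, ?_, ?_, ?_⟩
    · rw [abs_of_nonneg hd]; exact hle.trans (min_le_left _ _)
    · rw [abs_of_nonneg hd]; exact hle.trans (min_le_right _ _)
    · simpa using hu12.le
  · rintro ⟨f01, f02, f12, θ0, θ1, θ2, h1, h2, h3, h4, h5, h6, ha, hb, hc⟩
    have h7 : f02 - f01 = -d / 2 - 2 * f12 := by linarith
    have key : x12 * f12 = x * (f02 - f01) := by linarith
    rw [h7] at key
    have hf12 : (2 * x + x12) * f12 = -(x * d) / 2 := by linear_combination key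
    have habs : |f12| ≤ u12 := hc
    rcases abs_le.mp habs with ⟨hl, hr⟩
    nlinarith [hx.le, hx12.le]
end
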